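/- arXiv:1702.03507 — 6 statements merged into one kernel-verified Lean document; each statement's English description precedes it below -/
import Mathlib

section
/- Fix α > 2, P₁ > 0 and λ₁ > 0, and for each I > 0 let R(I) denote the unique positive solution of (I/P₁)·R^α − (2πλ₁/(α−2))·R² − 1 = 0. Then R is strictly decreasing in I: if 0 < I₁ < I₂ then R(I₂) < R(I₁). (Remark 1, item 1: the empty-ball radius decreases with the measured interference.) -/
/-!
Dividing the defining equation by `R ^ α` gives `I / P₁ = c R ^ (2 - α) + R ^ (-α)` with
`c = 2πλ₁/(α - 2) > 0`. For `α > 2` both exponents are negative, so the right-hand side is strictly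
decreasing in `R > 0`; hence a larger `I` forces a smaller radius.
-/

open Real Set

theorem strictAntiOn_mul_rpow_add_rpow {c β γ : ℝ} (hc : 0 ≤ c) (hβ : β ≤ 0) (hγ : γ < 0) :
    StrictAntiOn (fun R : ℝ => c * R ^ β + R ^ γ) (Ioi 0) := fun _ ha _ _ hab =>
  add_lt_add_of_le_of_lt (mul_le_mul_of_nonneg_left (rpow_le_rpow_of_nonpos ha hab.le hβ) hc)
    (rpow_lt_rpow_of_neg ha hab hγ)

theorem eq_mul_rpow_sub_add_rpow_neg {a c α R : ℝ} (hR : 0 < R)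
    (h : a * R ^ α - c * R ^ 2 - 1 = 0) : a = c * R ^ (2 - α) + R ^ (-α) := by
  have hRα : 0 < R ^ α := rpow_pos_of_pos hR α
  rw [rpow_sub hR, rpow_neg hR.le, rpow_two]
  field_simp
  linarith

/-- Remark 1, item 1: the empty-ball radius strictly decreases with the measured
interference `I`. -/
theorem empty_ball_radius_strictAnti_in_I (α P₁ lam1 : ℝ) (hα : 2 < α) (hP : 0 < P₁)
    (hlam1 : 0 < lam1) (R : ℝ → ℝ)
    (hR : ∀ I : ℝ, 0 < I →
      0 < R I ∧ (I / P₁) * R I ^ α - (2 * π * lam1 / (α - 2)) * R I ^ 2 - 1 = 0)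
    (I₁ I₂ : ℝ) (hI₁ : 0 < I₁) (hI₁₂ : I₁ < I₂) : R I₂ < R I₁ := by
  obtain ⟨hR₁, h₁⟩ := hR I₁ hI₁
  obtain ⟨hR₂, h₂⟩ := hR I₂ (hI₁.trans hI₁₂)
  have hc : 0 ≤ 2 * π * lam1 / (α - 2) := div_nonneg (by positivity) (by linarith)
  have hg := strictAntiOn_mul_rpow_add_rpow hc (by linarith : 2 - α ≤ 0) (by linarith : -α < 0)
  refine (hg.lt_iff_gt hR₁ hR₂).1 ?_
  rw [← eq_mul_rpow_sub_add_rpow_neg hR₁ h₁, ← eq_mul_rpow_sub_add_rpow_neg hR₂ h₂]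
  exact div_lt_div_of_pos_right hI₁₂ hP
end

section
/- Fix α > 2, λ₁ > 0 and I > 0, and for each P₁ > 0 let R(P₁) denote the unique positive solution of (I/P₁)·R^α − (2πλ₁/(α−2))·R² − 1 = 0. Then R is strictly increasing in P₁: if 0 < P < P' then R(P) < R(P'). (Remark 1, item 2: for higher primary transmit power the empty-ball radius increases.) -/
open Real

/-! Dividing the defining equation by `R²` puts it in the form
`(I / P₁) · R^(α-2) - R⁻² = 2πλ₁/(α-2)`. For fixed `a > 0` the left side `a · r^(α-2) - r⁻²`
is strictly increasing in `r`, and it strictly increases with `a`; since `I / P₁` decreases in `P₁`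
while the right side is constant, `R` must increase. -/

lemma mul_rpow_sub_two_sub_inv_sq_eq {a c α r : ℝ} (hr : 0 < r)
    (h : a * r ^ α - c * r ^ 2 - 1 = 0) : a * r ^ (α - 2) - (r ^ 2)⁻¹ = c := by
  rw [rpow_sub hr, rpow_two]
  field_simp
  linarith

lemma strictMonoOn_mul_rpow_sub_two_sub_inv_sq {a α : ℝ} (ha : 0 ≤ a) (hα : 2 ≤ α) :
    StrictMonoOn (fun r : ℝ => a * r ^ (α - 2) - (r ^ 2)⁻¹) (Set.Ioi 0) := by
  intro x (hx : 0 < x) y (hy : 0 < y) hxy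
  have hpow : a * x ^ (α - 2) ≤ a * y ^ (α - 2) :=
    mul_le_mul_of_nonneg_left (rpow_le_rpow hx.le hxy.le (by linarith)) ha
  have hinv : (y ^ 2)⁻¹ < (x ^ 2)⁻¹ := inv_strictAnti₀ (by positivity) (by gcongr)
  linarith

theorem empty_ball_radius_strictMono_in_power_general (α lam1 I : ℝ) (hα : 2 < α)
    (hI : 0 < I) (R : ℝ → ℝ)
    (hR : ∀ P₁ : ℝ, 0 < P₁ →
      0 < R P₁ ∧ (I / P₁) * R P₁ ^ α - (2 * π * lam1 / (α - 2)) * R P₁ ^ 2 - 1 = 0)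
    (P P' : ℝ) (hP : 0 < P) (hPP' : P < P') : R P < R P' := by
  have hP' : 0 < P' := hP.trans hPP'
  obtain ⟨hr, heq⟩ := hR P hP
  obtain ⟨hr', heq'⟩ := hR P' hP'
  have hmono := strictMonoOn_mul_rpow_sub_two_sub_inv_sq (div_pos hI hP').le hα.le
  refine (hmono.lt_iff_lt hr hr').mp ?_
  have hpower : I / P' * R P ^ (α - 2) < I / P * R P ^ (α - 2) :=
    mul_lt_mul_of_pos_right (div_lt_div_of_pos_left hI hP hPP') (rpow_pos_of_pos hr _)
  have hsol := mul_rpow_sub_two_sub_inv_sq_eq hr heq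
  have hsol' := mul_rpow_sub_two_sub_inv_sq_eq hr' heq'
  linarith

/-- Remark 1, item 2: the empty-ball radius strictly increases with the primary
transmit power `P₁`. -/
theorem empty_ball_radius_strictMono_in_power (α lam1 I : ℝ) (hα : 2 < α) (hlam1 : 0 < lam1)
    (hI : 0 < I) (R : ℝ → ℝ)
    (hR : ∀ P₁ : ℝ, 0 < P₁ →
      0 < R P₁ ∧ (I / P₁) * R P₁ ^ α - (2 * π * lam1 / (α - 2)) * R P₁ ^ 2 - 1 = 0)
    (P P' : ℝ) (hP : 0 < P) (hPP' : P < P') : R P < R P' :=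
  empty_ball_radius_strictMono_in_power_general α lam1 I hα hI R hR P P' hP hPP'
end

section
/- Fix α > 2, P₁ > 0 and λ₁ > 0, and for each I > 0 let R(I) denote the unique positive solution of (I/P₁)·R^α − (2πλ₁/(α−2))·R² − 1 = 0. Then the map I ↦ R(I) is a strictly decreasing bijection from (0, ∞) onto (0, ∞). -/
open Real

/-!
Solving the defining equation for `I` expresses the interference as a function of the radius,
`I = P₁ (κ R² + 1) / R^α = P₁ (κ R^(2-α) + R^(-α))` with `κ = 2πλ₁/(α-2)`, which is positive and
strictly decreasing on `(0, ∞)` because `2 - α ≤ 0` and `-α < 0`. `R` is a right inverse of this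
strictly decreasing map, hence itself strictly decreasing, and injectivity of the map makes `R`
a bijection of `(0, ∞)`.
-/

open Set

theorem StrictAntiOn.strictAntiOn_bijOn_of_leftInvOn {α β : Type*} [LinearOrder α]
    [LinearOrder β] {f : α → β} {g : β → α} {s : Set α} {t : Set β} (hf : StrictAntiOn f s)
    (hfs : MapsTo f s t) (hgt : MapsTo g t s) (hfg : LeftInvOn f g t) :
    StrictAntiOn g t ∧ BijOn g t s :=
  ⟨fun a ha b hb hab => (hf.lt_iff_gt (hgt ha) (hgt hb)).1 (by rwa [hfg ha, hfg hb]),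
    InvOn.bijOn ⟨hfg, hf.injOn.rightInvOn_of_leftInvOn hfg hfs hgt⟩ hgt hfs⟩

noncomputable def emptyBallInterference (P₁ κ α r : ℝ) : ℝ :=
  P₁ * (κ * r ^ (2 - α) + r ^ (-α))

section

variable {P₁ κ α : ℝ}

theorem emptyBallInterference_pos (hP : 0 < P₁) (hκ : 0 ≤ κ) {r : ℝ} (hr : 0 < r) :
    0 < emptyBallInterference P₁ κ α r := by
  unfold emptyBallInterference
  positivity

theorem strictAntiOn_emptyBallInterference (hP : 0 < P₁) (hκ : 0 ≤ κ) (hα : 2 ≤ α) :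
    StrictAntiOn (emptyBallInterference P₁ κ α) (Ioi 0) := fun a ha b _ hab => by
  have hquad : b ^ (2 - α) ≤ a ^ (2 - α) := rpow_le_rpow_of_nonpos ha hab.le (by linarith)
  have hconst : b ^ (-α) < a ^ (-α) := rpow_lt_rpow_of_neg ha hab (by linarith)
  exact mul_lt_mul_of_pos_left
    (add_lt_add_of_le_of_lt (mul_le_mul_of_nonneg_left hquad hκ) hconst) hP

theorem emptyBallInterference_eq_of_eq_zero {I r : ℝ} (hP : 0 < P₁) (hr : 0 < r)
    (h : I / P₁ * r ^ α - κ * r ^ 2 - 1 = 0) : emptyBallInterference P₁ κ α r = I := by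
  have hrα : 0 < r ^ α := rpow_pos_of_pos hr α
  rw [emptyBallInterference, rpow_sub hr, rpow_neg hr.le, rpow_two]
  field_simp at h ⊢
  linear_combination -h

end

/-- The map `I ↦ R(I)` sending the measured interference to the empty-ball radius is a
strictly decreasing bijection from `(0, ∞)` onto `(0, ∞)`. -/
theorem empty_ball_radius_strictAntiOn_bijOn (α P₁ lam1 : ℝ) (hα : 2 < α) (hP : 0 < P₁)
    (hlam1 : 0 < lam1) (R : ℝ → ℝ)
    (hR : ∀ I : ℝ, 0 < I →
      0 < R I ∧ (I / P₁) * R I ^ α - (2 * π * lam1 / (α - 2)) * R I ^ 2 - 1 = 0) :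
    StrictAntiOn R (Set.Ioi 0) ∧ Set.BijOn R (Set.Ioi 0) (Set.Ioi 0) := by
  have hκ : 0 ≤ 2 * π * lam1 / (α - 2) := div_nonneg (by positivity) (by linarith)
  exact (strictAntiOn_emptyBallInterference hP hκ hα.le).strictAntiOn_bijOn_of_leftInvOn
    (fun r hr => emptyBallInterference_pos hP hκ hr) (fun I hI => (hR I hI).1)
    (fun I hI => emptyBallInterference_eq_of_eq_zero hP (hR I hI).1 (hR I hI).2)
end

section
/- (Pfaff-transformation bound used in the proof of Proposition 2.) For every real α > 2 and every t > 0, 1 + t^{2/α} · ∫_{t^{−2/α}}^{∞} 1/(1 + u^{α/2}) du ≤ ρ · (1 + t)^{2/α}, where ρ := (2π/α)/sin(2π/α). -/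
/-!
Put `δ = 2 / α ∈ (0, 1)`. The substitution `u = (z / t) ^ δ` turns the left side into
`1 + δ t ∫_1^∞ z^(δ-1) / (t + z) dz`. Euler's reflection formula `Γ(δ) Γ(1-δ) = π / sin (π δ)`,
read as the Beta integral `∫_0^∞ y^(δ-1) / (c + y) dy = c^(δ-1) π / sin (π δ)`, turns the right
side into `δ (1 + t) ∫_0^∞ y^(δ-1) / (1 + t + y) dy`. Writing `1 = δ ∫_0^1 y^(δ-1) dy`, the
right side minus the left side becomes `δ` times
`∫_1^∞ y^δ / ((t + y)(1 + t + y)) dy - ∫_0^1 y^δ / (1 + t + y) dy`,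
which is nonnegative: with `y^δ` replaced by `1` both integrals equal `log ((2 + t) / (1 + t))`,
and `y^δ ≥ 1` on `(1, ∞)` while `y^δ ≤ 1` on `(0, 1]`.
-/

open Real MeasureTheory Set Filter Topology

theorem integral_Ioo_rpow_mul_one_sub_rpow_neg {δ : ℝ} (h0 : 0 < δ) (h1 : δ < 1) :
    ∫ x in Ioo (0 : ℝ) 1, x ^ (δ - 1) * (1 - x) ^ (-δ) = π / sin (π * δ) := by
  have hB : ((∫ x in Ioo (0 : ℝ) 1, x ^ (δ - 1) * (1 - x) ^ (-δ) : ℝ) : ℂ) =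
      Complex.betaIntegral δ (1 - δ) := by
    refine (integral_ofReal (𝕜 := ℂ)).symm.trans ?_
    rw [Complex.betaIntegral, intervalIntegral.integral_of_le zero_le_one,
      integral_Ioc_eq_integral_Ioo]
    refine setIntegral_congr_fun measurableSet_Ioo fun x hx ↦ ?_
    rw [RCLike.ofReal_eq_complex_ofReal, Complex.ofReal_mul, Complex.ofReal_cpow hx.1.le,
      Complex.ofReal_cpow (sub_pos.2 hx.2).le]
    push_cast
    ring_nf
  have hΓ := Complex.betaIntegral_eq_Gamma_mul_div (δ : ℂ) (1 - δ) (by simpa using h0)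
    (by simpa using h1)
  rw [add_sub_cancel, Complex.Gamma_one, div_one, Complex.Gamma_mul_Gamma_one_sub] at hΓ
  exact_mod_cast hB.trans hΓ

theorem integral_Ioi_rpow_div_add {δ c : ℝ} (h0 : 0 < δ) (h1 : δ < 1) (hc : 0 < c) :
    ∫ y in Ioi (0 : ℝ), y ^ (δ - 1) / (c + y) = c ^ (δ - 1) * (π / sin (π * δ)) := by
  have himage : (fun y ↦ y / (c + y)) '' Ioi 0 = Ioo 0 1 := by
    ext x
    constructor
    · rintro ⟨y, hy : 0 < y, rfl⟩
      exact ⟨by positivity, (div_lt_one (by positivity)).2 (by linarith)⟩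
    · rintro ⟨hx0, hx1⟩
      refine ⟨c * x / (1 - x), div_pos (mul_pos hc hx0) (by linarith), ?_⟩
      field_simp
      ring
  have hderiv : ∀ y ∈ Ioi (0 : ℝ),
      HasDerivWithinAt (fun y ↦ y / (c + y)) (c / (c + y) ^ 2) (Ioi 0) y := by
    intro y (hy : 0 < y)
    have h := (hasDerivAt_id' y).div ((hasDerivAt_id' y).const_add c) (by positivity : c + y ≠ 0)
    refine (h.congr_deriv ?_).hasDerivWithinAt
    ring
  have hinj : InjOn (fun y ↦ y / (c + y)) (Ioi 0) := by
    intro a (ha : 0 < a) b (hb : 0 < b) hab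
    field_simp at hab
    nlinarith
  have hsubst := integral_image_eq_integral_abs_deriv_smul measurableSet_Ioi hderiv hinj
    (fun x ↦ x ^ (δ - 1) * (1 - x) ^ (-δ))
  rw [himage, integral_Ioo_rpow_mul_one_sub_rpow_neg h0 h1] at hsubst
  rw [hsubst, ← integral_const_mul]
  refine setIntegral_congr_fun measurableSet_Ioi fun y (hy : 0 < y) ↦ ?_
  have hcy : 0 < c + y := by positivity
  have hcy_pow : (c + y) ^ δ = (c + y) ^ (δ - 1) * (c + y) := by
    rw [← rpow_add_one hcy.ne']; ring_nf
  have hsub : 1 - y / (c + y) = c / (c + y) := by field_simp; ring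
  rw [smul_eq_mul, abs_of_pos (by positivity), hsub, div_rpow hy.le hcy.le,
    rpow_neg (by positivity), div_rpow hc.le hcy.le, hcy_pow, rpow_sub_one hc.ne']
  field_simp

theorem integrableOn_Ioi_rpow_div_add {δ c : ℝ} (h0 : 0 < δ) (h1 : δ < 1) (hc : 0 < c) :
    IntegrableOn (fun y ↦ y ^ (δ - 1) / (c + y)) (Ioi 0) := by
  refine Integrable.of_integral_ne_zero ?_
  rw [integral_Ioi_rpow_div_add h0 h1 hc]
  have : 0 < sin (π * δ) := sin_pos_of_pos_of_lt_pi (by positivity) (by nlinarith [pi_pos])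
  positivity

theorem rpow_mul_integral_Ioi_one_div_one_add_rpow_inv {δ t : ℝ} (hδ : 0 < δ) (ht : 0 < t) :
    t ^ δ * ∫ u in Ioi (t ^ (-δ)), 1 / (1 + u ^ δ⁻¹) =
      δ * t * ∫ z in Ioi 1, z ^ (δ - 1) / (t + z) := by
  have hpow := integral_comp_rpow_Ioi_of_pos' (g := fun u ↦ 1 / (1 + u ^ δ⁻¹)) hδ
    (rpow_pos_of_pos ht (-δ)).le
  rw [← rpow_mul ht.le, neg_mul, mul_inv_cancel₀ hδ.ne', rpow_neg_one] at hpow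
  calc t ^ δ * ∫ u in Ioi (t ^ (-δ)), 1 / (1 + u ^ δ⁻¹)
      = t ^ δ * ∫ x in Ioi t⁻¹, δ * x ^ (δ - 1) / (1 + x) := by
        rw [← hpow]
        congr 1
        refine setIntegral_congr_fun measurableSet_Ioi fun x (hx : t⁻¹ < x) ↦ ?_
        have hx0 : 0 < x := (inv_pos.2 ht).trans hx
        rw [smul_eq_mul, ← rpow_mul hx0.le, mul_inv_cancel₀ hδ.ne', rpow_one, mul_one_div]
    _ = t ^ δ * (t⁻¹ * ∫ z in Ioi 1, δ * (t⁻¹ * z) ^ (δ - 1) / (1 + t⁻¹ * z)) := by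
        have hscale := integral_comp_mul_left_Ioi' (fun x ↦ δ * x ^ (δ - 1) / (1 + x)) 1
          (inv_pos.2 ht)
        rw [mul_one, smul_eq_mul] at hscale
        rw [← hscale]
    _ = δ * t * ∫ z in Ioi 1, z ^ (δ - 1) / (t + z) := by
        rw [← integral_const_mul, ← integral_const_mul, ← integral_const_mul]
        refine setIntegral_congr_fun measurableSet_Ioi fun z (hz : 1 < z) ↦ ?_
        have hδt : t ^ δ = t ^ (δ - 1) * t := by rw [← rpow_add_one ht.ne']; ring_nf
        rw [mul_rpow (inv_pos.2 ht).le (by linarith), inv_rpow ht.le, hδt]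
        have : 0 < t ^ (δ - 1) := rpow_pos_of_pos ht _
        field_simp

theorem integral_Ioc_inv_add {c : ℝ} (hc : 0 < c) :
    ∫ y in Ioc (0 : ℝ) 1, (c + y)⁻¹ = log ((c + 1) / c) := by
  rw [← intervalIntegral.integral_of_le zero_le_one,
    intervalIntegral.integral_comp_add_left (fun x ↦ x⁻¹), add_zero,
    integral_inv_of_pos hc (by linarith)]

theorem integral_Ioi_inv_mul_add_one {t : ℝ} (ht : -1 < t) :
    ∫ y in Ioi (1 : ℝ), ((t + y) * (1 + t + y))⁻¹ = log ((1 + t + 1) / (1 + t)) := by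
  have hderiv : ∀ y ∈ Ici (1 : ℝ), HasDerivAt (fun y ↦ log (t + y) - log (1 + t + y))
      ((t + y) * (1 + t + y))⁻¹ y := by
    intro y (hy : 1 ≤ y)
    have h1 : t + y ≠ 0 := by linarith
    have h2 : 1 + t + y ≠ 0 := by linarith
    have h := (((hasDerivAt_id' y).const_add t).log h1).sub
      (((hasDerivAt_id' y).const_add (1 + t)).log h2)
    refine h.congr_deriv ?_
    field_simp
    ring
  have hnonneg : ∀ y ∈ Ioi (1 : ℝ), 0 ≤ ((t + y) * (1 + t + y))⁻¹ := by
    intro y (hy : 1 < y)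
    have : 0 < t + y := by linarith
    have : 0 < 1 + t + y := by linarith
    positivity
  have hlim : Tendsto (fun y ↦ log (t + y) - log (1 + t + y)) atTop (𝓝 0) := by
    have h := ((tendsto_log_comp_add_sub_log 1).comp
      (tendsto_atTop_add_const_left atTop t tendsto_id)).neg
    rw [neg_zero] at h
    refine h.congr fun y ↦ ?_
    simp only [Function.comp, id]
    ring_nf
  rw [integral_Ioi_of_hasDerivAt_of_nonneg' hderiv hnonneg hlim,
    log_div (by linarith) (by linarith)]
  ring_nf

theorem integrableOn_Ioi_rpow_div_mul {δ t : ℝ} (hδ : δ < 1) (ht : 0 ≤ t) :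
    IntegrableOn (fun y ↦ y ^ δ / ((t + y) * (1 + t + y))) (Ioi 1) := by
  refine (integrableOn_Ioi_rpow_of_lt (by linarith : δ - 2 < -1) one_pos).mono'
    (by fun_prop : Measurable _).aestronglyMeasurable ?_
  filter_upwards [ae_restrict_mem measurableSet_Ioi] with y (hy : 1 < y)
  have hy0 : 0 < y := by linarith
  rw [norm_of_nonneg (by positivity), rpow_sub hy0, rpow_two]
  exact div_le_div_of_nonneg_left (by positivity) (by positivity) (by nlinarith)

theorem integral_Ioc_rpow_div_le_integral_Ioi {δ t : ℝ} (hδ0 : 0 ≤ δ) (hδ1 : δ < 1)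
    (ht : 0 ≤ t) :
    ∫ y in Ioc (0 : ℝ) 1, y ^ δ / (1 + t + y) ≤
      ∫ y in Ioi (1 : ℝ), y ^ δ / ((t + y) * (1 + t + y)) := by
  have hc : 0 < 1 + t := by linarith
  calc ∫ y in Ioc (0 : ℝ) 1, y ^ δ / (1 + t + y)
      ≤ ∫ y in Ioc (0 : ℝ) 1, (1 + t + y)⁻¹ := by
        refine integral_mono_of_nonneg ?_ ?_ ?_
        · filter_upwards [ae_restrict_mem measurableSet_Ioc] with y hy
          have := hy.1
          positivity
        · refine ContinuousOn.integrableOn_Icc ?_ |>.mono_set Ioc_subset_Icc_self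
          exact (continuousOn_const.add continuousOn_id).inv₀
            fun y hy ↦ (by linarith [hy.1] : 0 < 1 + t + y).ne'
        · filter_upwards [ae_restrict_mem measurableSet_Ioc] with y hy
          rw [div_eq_mul_inv]
          have : 0 < 1 + t + y := by linarith [hy.1]
          exact mul_le_of_le_one_left (by positivity) (rpow_le_one hy.1.le hy.2 hδ0)
    _ = ∫ y in Ioi (1 : ℝ), ((t + y) * (1 + t + y))⁻¹ := by
        rw [integral_Ioc_inv_add hc, integral_Ioi_inv_mul_add_one (by linarith)]
    _ ≤ ∫ y in Ioi (1 : ℝ), y ^ δ / ((t + y) * (1 + t + y)) := by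
        refine integral_mono_of_nonneg ?_ (integrableOn_Ioi_rpow_div_mul hδ1 ht) ?_
        · filter_upwards [ae_restrict_mem measurableSet_Ioi] with y (hy : 1 < y)
          have : 0 < t + y := by linarith
          positivity
        · filter_upwards [ae_restrict_mem measurableSet_Ioi] with y (hy : 1 < y)
          have : 0 < t + y := by linarith
          rw [div_eq_mul_inv]
          exact le_mul_of_one_le_left (by positivity) (one_le_rpow hy.le hδ0)

theorem one_add_mul_integral_Ioi_le {δ t : ℝ} (h0 : 0 < δ) (h1 : δ < 1) (ht : 0 < t) :
    1 + δ * t * ∫ y in Ioi 1, y ^ (δ - 1) / (t + y) ≤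
      δ * (1 + t) * ∫ y in Ioi 0, y ^ (δ - 1) / (1 + t + y) := by
  have hf := integrableOn_Ioi_rpow_div_add h0 h1 (by positivity : 0 < 1 + t)
  have hg := (integrableOn_Ioi_rpow_div_add h0 h1 ht).mono_set (Ioi_subset_Ioi zero_le_one)
  have hsplit : ∫ y in Ioi 0, y ^ (δ - 1) / (1 + t + y) =
      (∫ y in Ioc 0 1, y ^ (δ - 1) / (1 + t + y)) + ∫ y in Ioi 1, y ^ (δ - 1) / (1 + t + y) := by
    rw [← Ioc_union_Ioi_eq_Ioi zero_le_one, setIntegral_union (Ioc_disjoint_Ioi le_rfl)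
      measurableSet_Ioi (hf.mono_set Ioc_subset_Ioi_self)
      (hf.mono_set (Ioi_subset_Ioi zero_le_one))]
  have hnear : ∫ y in Ioc (0 : ℝ) 1, y ^ δ / (1 + t + y) =
      δ⁻¹ - (1 + t) * ∫ y in Ioc 0 1, y ^ (δ - 1) / (1 + t + y) := by
    have hpow : IntervalIntegrable (fun y ↦ y ^ (δ - 1)) volume 0 1 :=
      intervalIntegral.intervalIntegrable_rpow' (by linarith)
    have hpow_eq : ∫ y in Ioc (0 : ℝ) 1, y ^ (δ - 1) = δ⁻¹ := by
      rw [← intervalIntegral.integral_of_le zero_le_one, integral_rpow (Or.inl (by linarith)),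
        sub_add_cancel, one_rpow, zero_rpow h0.ne', sub_zero, one_div]
    rw [← hpow_eq, ← integral_const_mul, ← integral_sub hpow.1
      ((hf.mono_set Ioc_subset_Ioi_self).const_mul _)]
    refine setIntegral_congr_fun measurableSet_Ioc fun y hy ↦ ?_
    have hy0 : 0 < y := hy.1
    rw [rpow_sub_one hy0.ne']
    field_simp
    ring
  have hfar : ∫ y in Ioi (1 : ℝ), y ^ δ / ((t + y) * (1 + t + y)) =
      (1 + t) * (∫ y in Ioi 1, y ^ (δ - 1) / (1 + t + y)) -
        t * ∫ y in Ioi 1, y ^ (δ - 1) / (t + y) := by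
    rw [← integral_const_mul, ← integral_const_mul, ← integral_sub
      ((hf.mono_set (Ioi_subset_Ioi zero_le_one)).const_mul _) (hg.const_mul _)]
    refine setIntegral_congr_fun measurableSet_Ioi fun y (hy : 1 < y) ↦ ?_
    have hy0 : 0 < y := by linarith
    rw [rpow_sub_one hy0.ne']
    field_simp
    ring
  have hcmp := integral_Ioc_rpow_div_le_integral_Ioi h0.le h1 ht.le
  rw [hnear, hfar] at hcmp
  rw [hsplit]
  have : δ * δ⁻¹ = 1 := mul_inv_cancel₀ h0.ne'
  nlinarith [mul_le_mul_of_nonneg_left hcmp h0.le]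

/-- Pfaff-transformation bound used in the proof of Proposition 2:
`1 + t^{2/α}·∫_{t^{−2/α}}^∞ du/(1 + u^{α/2}) ≤ ρ·(1 + t)^{2/α}` with
`ρ := (2π/α)/sin(2π/α)`. -/
theorem pfaff_transformation_bound (α t : ℝ) (hα : 2 < α) (ht : 0 < t) :
    1 + t ^ (2 / α) * ∫ u in Set.Ioi (t ^ (-(2 / α))), 1 / (1 + u ^ (α / 2)) ≤
      (2 * π / α) / Real.sin (2 * π / α) * (1 + t) ^ (2 / α) := by
  have h0 : 0 < 2 / α := by positivity
  have h1 : 2 / α < 1 := (div_lt_one (by positivity)).2 hα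
  rw [← inv_div 2 α, rpow_mul_integral_Ioi_one_div_one_add_rpow_inv h0 ht]
  calc _ ≤ 2 / α * (1 + t) * ∫ y in Ioi 0, y ^ (2 / α - 1) / (1 + t + y) :=
        one_add_mul_integral_Ioi_le h0 h1 ht
    _ = _ := by
        rw [integral_Ioi_rpow_div_add h0 h1 (by positivity), rpow_sub_one (by positivity)]
        field_simp
end

section
/- (Key integral inequality of Proposition 2, case d ≤ R_I.) For every real α > 2, every s > 0 and every a > 0, ∫_{a}^{∞} 2·s·y^{1−α} / (1 + s·y^{−α}) dy ≤ a² · ( ρ·(1 + s·a^{−α})^{2/α} − 1 ), where ρ := (2π/α)/sin(2π/α). -/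
/-!
After clearing `y ^ (-α)` the integrand is `g y = 2 s y / (y ^ α + s)`. Over all of `(0, ∞)`
the substitutions `y = x ^ (1 / α)`, `x = s u` and `u = t⁻¹ - 1` turn `∫ g` into a Beta
integral, and Euler's reflection formula evaluates it to `ρ s ^ (2 / α)`. On `(0, a)`, `g`
dominates the derivative of `y ^ 2 - (y ^ α + s) ^ (2 / α)` because
`y ^ 2 ≤ (y ^ α + s) ^ (2 / α)`, so `∫₀ᵃ g ≥ a ^ 2 - (a ^ α + s) ^ (2 / α) + s ^ (2 / α)`.
Subtracting, and using `ρ ≥ 1` to absorb the leftover `s ^ (2 / α)`, gives the bound.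
-/

open Real MeasureTheory Set

lemma integral_Ioo_rpow_mul_one_sub_rpow {u v : ℝ} (hu : 0 < u) (hv : 0 < v) :
    ∫ x in Ioo (0 : ℝ) 1, x ^ (u - 1) * (1 - x) ^ (v - 1) = Gamma u * Gamma v / Gamma (u + v) := by
  have hB : Complex.betaIntegral u v =
      ↑(∫ x in Ioo (0 : ℝ) 1, x ^ (u - 1) * (1 - x) ^ (v - 1)) := by
    rw [Complex.betaIntegral, intervalIntegral.integral_of_le zero_le_one,
      integral_Ioc_eq_integral_Ioo, ← integral_complex_ofReal]
    refine setIntegral_congr_fun measurableSet_Ioo fun x hx => ?_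
    push_cast
    rw [Complex.ofReal_cpow hx.1.le, Complex.ofReal_cpow (sub_nonneg.2 hx.2.le)]
    push_cast
    rfl
  have h := Complex.betaIntegral_eq_Gamma_mul_div u v (by simpa) (by simpa)
  rw [hB, ← Complex.ofReal_add, Complex.Gamma_ofReal, Complex.Gamma_ofReal,
    Complex.Gamma_ofReal] at h
  exact_mod_cast h

lemma integral_Ioi_eq_integral_Ioo_inv_sub_one (g : ℝ → ℝ) :
    ∫ y in Ioi (0 : ℝ), g y = ∫ x in Ioo (0 : ℝ) 1, (x ^ 2)⁻¹ * g (x⁻¹ - 1) := by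
  have himage : (fun x : ℝ => x⁻¹ - 1) '' Ioo 0 1 = Ioi 0 := by
    ext y
    refine ⟨?_, fun hy => ⟨(1 + y)⁻¹, ⟨?_, inv_lt_one_of_one_lt₀ (by simpa using hy)⟩, by simp⟩⟩
    · rintro ⟨x, hx, rfl⟩
      simpa using (one_lt_inv₀ hx.1).2 hx.2
    · have : (0 : ℝ) < y := hy
      positivity
  rw [← himage, integral_image_eq_integral_abs_deriv_smul measurableSet_Ioo
    (fun x hx => ((hasDerivAt_inv hx.1.ne').sub_const 1).hasDerivWithinAt)
    (fun x _ y _ h => inv_injective (sub_left_injective h))]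
  simp only [abs_neg, smul_eq_mul, abs_inv, abs_pow, sq_abs]

lemma integral_Ioi_rpow_sub_one_div_one_add {c : ℝ} (hc0 : 0 < c) (hc1 : c < 1) :
    ∫ x in Ioi (0 : ℝ), x ^ (c - 1) / (1 + x) = π / sin (π * c) := by
  have hB := integral_Ioo_rpow_mul_one_sub_rpow (sub_pos.2 hc1) hc0
  rw [sub_add_cancel, Gamma_one, div_one, mul_comm, Gamma_mul_Gamma_one_sub] at hB
  rw [integral_Ioi_eq_integral_Ioo_inv_sub_one, ← hB]
  refine setIntegral_congr_fun measurableSet_Ioo fun x hx => ?_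
  have hx0 : 0 < x := hx.1
  rw [show x⁻¹ - 1 = (1 - x) / x by field_simp, div_rpow (sub_nonneg.2 hx.2.le) hx0.le,
    rpow_sub_one hx0.ne', show 1 - c - 1 = -c by ring, rpow_neg hx0.le]
  have : 0 < x ^ c := rpow_pos_of_pos hx0 c
  field_simp
  ring

lemma integral_Ioi_rpow_sub_one_div_add {c s : ℝ} (hc0 : 0 < c) (hc1 : c < 1) (hs : 0 < s) :
    ∫ x in Ioi (0 : ℝ), x ^ (c - 1) / (x + s) = s ^ (c - 1) * (π / sin (π * c)) := by
  have h := integral_comp_mul_left_Ioi (fun x => x ^ (c - 1) / (x + s)) 0 hs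
  rw [mul_zero, smul_eq_mul, eq_inv_mul_iff_mul_eq₀ hs.ne'] at h
  rw [← h, ← integral_Ioi_rpow_sub_one_div_one_add hc0 hc1, ← integral_const_mul,
    ← integral_const_mul]
  refine setIntegral_congr_fun measurableSet_Ioi fun x hx => ?_
  have hx0 : 0 < x := hx
  rw [mul_rpow hs.le hx0.le, rpow_sub_one hs.ne']
  field_simp
  ring

lemma integral_Ioi_mul_div_rpow_add {α s : ℝ} (hα : 2 < α) (hs : 0 < s) :
    ∫ y in Ioi (0 : ℝ), 2 * s * y / (y ^ α + s) =
      s ^ (2 / α) * ((2 * π / α) / sin (2 * π / α)) := by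
  have hα0 : 0 < α := by linarith
  rw [← integral_comp_rpow_Ioi_of_pos (inv_pos.2 hα0)]
  have hvalue := integral_Ioi_rpow_sub_one_div_add (c := 2 / α) (by positivity)
    ((div_lt_one hα0).2 hα) hs
  rw [show π * (2 / α) = 2 * π / α by ring, rpow_sub_one hs.ne'] at hvalue
  have hpoint : ∀ x ∈ Ioi (0 : ℝ), (α⁻¹ * x ^ (α⁻¹ - 1)) • (2 * s * x ^ α⁻¹ / ((x ^ α⁻¹) ^ α + s))
      = 2 * s / α * (x ^ (2 / α - 1) / (x + s)) := by
    intro x hx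
    have hx0 : 0 < x := hx
    rw [← rpow_mul hx0.le, inv_mul_cancel₀ hα0.ne', rpow_one, smul_eq_mul, rpow_sub_one hx0.ne',
      rpow_sub_one hx0.ne', div_eq_mul_inv 2 α, mul_comm 2 α⁻¹, rpow_mul hx0.le, rpow_two]
    field_simp
  rw [setIntegral_congr_fun measurableSet_Ioi hpoint, integral_const_mul, hvalue]
  field_simp

lemma continuousOn_mul_div_rpow_add {α s : ℝ} (hα : 0 ≤ α) (hs : 0 < s) :
    ContinuousOn (fun y : ℝ => 2 * s * y / (y ^ α + s)) (Ici 0) :=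
  (continuousOn_const.mul continuousOn_id).div
    ((continuousOn_id.rpow_const fun _ _ => Or.inr hα).add continuousOn_const)
    fun _ hy => (add_pos_of_nonneg_of_pos (rpow_nonneg hy α) hs).ne'

lemma two_mul_sub_le_mul_div_rpow_add {α s y : ℝ} (hα : 0 < α) (hs : 0 ≤ s) (hy : 0 < y) :
    2 * y - 2 / α * (y ^ α + s) ^ (2 / α - 1) * (α * y ^ (α - 1)) ≤ 2 * s * y / (y ^ α + s) := by
  have hyα : 0 < y ^ α := rpow_pos_of_pos hy α
  have hden : 0 < y ^ α + s := by positivity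
  have hsq : y ^ 2 ≤ (y ^ α + s) ^ (2 / α) :=
    calc y ^ 2 = (y ^ α) ^ (2 / α) := by
          rw [← rpow_mul hy.le, mul_div_cancel₀ _ hα.ne', rpow_two]
      _ ≤ (y ^ α + s) ^ (2 / α) := by gcongr; linarith
  rw [rpow_sub_one hden.ne', rpow_sub_one hy.ne', ← sub_nonneg]
  have : 0 ≤ 2 * y ^ α * ((y ^ α + s) ^ (2 / α) - y ^ 2) / (y * (y ^ α + s)) := by
    have := sub_nonneg.2 hsq
    positivity
  convert this using 1
  field_simp
  ring

lemma sq_sub_rpow_add_le_integral {α s a : ℝ} (hα : 0 < α) (hs : 0 < s) (ha : 0 ≤ a) :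
    a ^ 2 - (a ^ α + s) ^ (2 / α) + s ^ (2 / α) ≤ ∫ y in 0..a, 2 * s * y / (y ^ α + s) := by
  have hG := intervalIntegral.sub_le_integral_of_hasDeriv_right_of_le ha
    (g := fun y : ℝ => y ^ 2 - (y ^ α + s) ^ (2 / α))
    (g' := fun y => 2 * y - 2 / α * (y ^ α + s) ^ (2 / α - 1) * (α * y ^ (α - 1)))
    (φ := fun y => 2 * s * y / (y ^ α + s)) ?_ ?_ ?_ ?_
  · simpa [zero_rpow hα.ne', sub_eq_add_neg, add_assoc] using hG
  · exact (continuous_pow 2).continuousOn.sub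
      (((continuousOn_id.rpow_const fun _ _ => Or.inr hα.le).add continuousOn_const).rpow_const
        fun _ _ => Or.inr (by positivity))
  · intro y hy
    have hden : 0 < y ^ α + s := by have := rpow_pos_of_pos hy.1 α; positivity
    have hpow : HasDerivAt (fun y : ℝ => y ^ 2) (2 * y) y := by
      simpa using hasDerivAt_pow 2 y
    exact (hpow.sub ((Real.hasDerivAt_rpow_const (Or.inl hden.ne')).comp y
      ((Real.hasDerivAt_rpow_const (Or.inl hy.1.ne')).add_const s))).hasDerivWithinAt
  · exact ((continuousOn_mul_div_rpow_add hα.le hs).mono Icc_subset_Ici_self).integrableOn_Icc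
  · exact fun y hy => two_mul_sub_le_mul_div_rpow_add hα hs.le hy.1

lemma one_le_div_sin {x : ℝ} (hx0 : 0 < x) (hxπ : x < π) : 1 ≤ x / sin x := by
  rw [one_le_div (sin_pos_of_pos_of_lt_pi hx0 hxπ)]
  exact (sin_lt hx0).le

lemma sq_mul_one_add_mul_rpow_neg_rpow {α s a : ℝ} (hα : 0 < α) (hs : 0 ≤ s) (ha : 0 < a) :
    a ^ 2 * (1 + s * a ^ (-α)) ^ (2 / α) = (a ^ α + s) ^ (2 / α) := by
  have haα : 0 < a ^ α := rpow_pos_of_pos ha α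
  rw [← rpow_two, ← mul_div_cancel₀ (2 : ℝ) hα.ne', rpow_mul ha.le, mul_div_cancel₀ _ hα.ne',
    ← mul_rpow haα.le (by positivity), rpow_neg ha.le, mul_add, mul_one, mul_left_comm,
    mul_inv_cancel₀ haα.ne', mul_one]

/-- Key integral inequality of Proposition 2 (case `d ≤ R_I`):
`∫_a^∞ 2·s·y^{1−α}/(1 + s·y^{−α}) dy ≤ a²·(ρ·(1 + s·a^{−α})^{2/α} − 1)` with
`ρ := (2π/α)/sin(2π/α)`. -/
theorem interference_exponent_upper_bound (α s a : ℝ) (hα : 2 < α) (hs : 0 < s)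
    (ha : 0 < a) :
    ∫ y in Set.Ioi a, 2 * s * y ^ (1 - α) / (1 + s * y ^ (-α)) ≤
      a ^ 2 * ((2 * π / α) / Real.sin (2 * π / α) * (1 + s * a ^ (-α)) ^ (2 / α) - 1) := by
  have hα0 : 0 < α := by linarith
  set ρ := (2 * π / α) / Real.sin (2 * π / α)
  have hρ : 1 ≤ ρ := one_le_div_sin (by positivity) (by rw [div_lt_iff₀ hα0]; nlinarith [pi_pos])
  have hintegrand : ∀ y ∈ Ioi a, 2 * s * y ^ (1 - α) / (1 + s * y ^ (-α)) =
      2 * s * y / (y ^ α + s) := by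
    intro y hy
    have hy0 : 0 < y := ha.trans hy
    have : 0 < y ^ α := rpow_pos_of_pos hy0 α
    rw [rpow_sub hy0, rpow_one, rpow_neg hy0.le]
    field_simp
  have hwhole := integral_Ioi_mul_div_rpow_add hα hs
  have hint : IntegrableOn (fun y : ℝ => 2 * s * y / (y ^ α + s)) (Ioi 0) :=
    Integrable.of_integral_ne_zero <| by
      rw [hwhole]
      exact (mul_pos (rpow_pos_of_pos hs _) (by linarith)).ne'
  have hsplit := intervalIntegral.integral_Ioi_sub_Ioi hint ha.le
  have hinitial := sq_sub_rpow_add_le_integral hα0 hs ha.le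
  have hmono : s ^ (2 / α) ≤ (a ^ α + s) ^ (2 / α) := by
    gcongr
    linarith [rpow_pos_of_pos ha α]
  rw [setIntegral_congr_fun measurableSet_Ioi hintegrand, mul_sub, ← mul_assoc, mul_comm _ ρ,
    mul_assoc, sq_mul_one_add_mul_rpow_neg_rpow hα0 hs.le ha, mul_one]
  linarith [mul_le_mul_of_nonneg_left hmono (sub_nonneg.2 hρ)]
end

section
/- (Exponent limit underlying Remark 2, item 2.) Let d, P₁, P₂, θ > 0 and α > 2, and define g(y) := P₁·θ·d^α·y^{1−α} / (P₂ + P₁·θ·d^α·y^{−α}) for y > 0. Then, as R → 0⁺, the interference exponent of the access probability formula (2), namely E(R) := ∫_{R+d}^{∞} 2π·g(y) dy + ∫_{|R−d|}^{R+d} 2·arccos( (R² − d² − y²)/(2·d·y) )·g(y) dy + ∫_{max(0, R−d)}^{|R−d|} 2π·g(y) dy, converges to ∫_{0}^{∞} 2π·g(y) dy = π·(P₁·θ·d^α/P₂)^{2/α}·∫_{0}^{∞} 1/(1 + u^{α/2}) du. (Hence the access probability becomes independent of the measured interference I as I → ∞.) -/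
/-!
Write `c = P₁θd^α`. On `(0, ∞)` the integrand is `g(y) = c y / (P₂ y^α + c)`, which is continuous
on `[0, ∞)`, at most `y`, and at most `(c/P₂) y^{1-α}`; since `α > 2` it is integrable.

For `0 < R < d` the two `2π`-regions of `E(R)` are `(0, d - R]` and `(d + R, ∞)`, so `E(R)` differs
from the full-plane integral only on the annulus `d - R < y ≤ d + R`, where the weight `2π` is
replaced by `2 arccos(…) ∈ [0, 2π]`. There `|g(y)| ≤ y ≤ 2d`, so the difference is `O(R)`.

The closed form comes from the substitutions `y = (c/P₂)^{1/α} t`, which turns `g` into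
`(c/P₂)^{1/α} t / (1 + t^α)`, and then `u = t²`.
-/

open Real MeasureTheory Filter Set

noncomputable def interferenceKernel (c p α y : ℝ) : ℝ :=
  c * y / (p * y ^ α + c)

section InterferenceKernel

variable {c p α y : ℝ}

theorem div_add_mul_rpow_neg_eq_interferenceKernel (hy : 0 < y) :
    c * y ^ (1 - α) / (p + c * y ^ (-α)) = interferenceKernel c p α y := by
  have hyα : y ^ α ≠ 0 := (rpow_pos_of_pos hy α).ne'
  rw [← mul_div_mul_right _ _ hyα, interferenceKernel, rpow_sub hy, rpow_one, rpow_neg hy.le]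
  congr 1 <;> field_simp

theorem interferenceKernel_denom_pos (hc : 0 < c) (hp : 0 ≤ p) (hy : 0 ≤ y) :
    0 < p * y ^ α + c := by
  have := rpow_nonneg hy α
  positivity

theorem interferenceKernel_nonneg (hc : 0 ≤ c) (hp : 0 ≤ p) (hy : 0 ≤ y) :
    0 ≤ interferenceKernel c p α y :=
  div_nonneg (mul_nonneg hc hy) (add_nonneg (mul_nonneg hp (rpow_nonneg hy α)) hc)

theorem interferenceKernel_le_self (hc : 0 < c) (hp : 0 ≤ p) (hy : 0 ≤ y) :
    interferenceKernel c p α y ≤ y := by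
  rw [interferenceKernel, div_le_iff₀ (interferenceKernel_denom_pos hc hp hy)]
  have := mul_nonneg hy (mul_nonneg hp (rpow_nonneg hy α))
  nlinarith

theorem interferenceKernel_le_rpow_one_sub (hc : 0 ≤ c) (hp : 0 < p) (hy : 0 < y) :
    interferenceKernel c p α y ≤ c / p * y ^ (1 - α) := by
  have hyα : 0 < y ^ α := rpow_pos_of_pos hy α
  calc interferenceKernel c p α y ≤ c * y / (p * y ^ α) := by
        unfold interferenceKernel
        gcongr
        linarith
    _ = c / p * y ^ (1 - α) := by
        rw [rpow_sub hy, rpow_one]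
        field_simp

theorem continuousOn_interferenceKernel (hc : 0 < c) (hp : 0 ≤ p) (hα : 0 ≤ α) :
    ContinuousOn (interferenceKernel c p α) (Ici 0) :=
  ((continuous_const.mul continuous_id).continuousOn).div
    ((continuous_const.mul (continuous_rpow_const hα)).add continuous_const).continuousOn
    fun _ hy => (interferenceKernel_denom_pos hc hp hy).ne'

theorem integrableOn_interferenceKernel (hc : 0 < c) (hp : 0 < p) (hα : 2 < α) :
    IntegrableOn (interferenceKernel c p α) (Ioi 0) := by
  have hcont : ContinuousOn (interferenceKernel c p α) (Ici 0) :=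
    continuousOn_interferenceKernel hc hp.le (by linarith)
  have hnear : IntegrableOn (interferenceKernel c p α) (Ioc 0 1) :=
    ((hcont.mono Icc_subset_Ici_self).integrableOn_Icc).mono_set Ioc_subset_Icc_self
  have hfar : IntegrableOn (interferenceKernel c p α) (Ioi 1) := by
    have hdecay : IntegrableOn (fun y : ℝ => c / p * y ^ (1 - α)) (Ioi 1) :=
      (integrableOn_Ioi_rpow_of_lt (show 1 - α < -1 by linarith) one_pos).const_mul (c / p)
    refine Integrable.mono' hdecay
      ((hcont.mono (Ioi_subset_Ici zero_le_one)).aestronglyMeasurable measurableSet_Ioi)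
      ((ae_restrict_iff' measurableSet_Ioi).mpr (Eventually.of_forall fun y hy => ?_))
    have hy : (0 : ℝ) < y := one_pos.trans hy
    rw [norm_of_nonneg (interferenceKernel_nonneg hc.le hp.le hy.le)]
    exact interferenceKernel_le_rpow_one_sub hc.le hp hy
  rw [← Ioc_union_Ioi_eq_Ioi zero_le_one]
  exact hnear.union hfar

theorem interferenceKernel_rpow_inv_mul (hc : 0 < c) (hp : 0 < p) (hα : α ≠ 0) {t : ℝ}
    (ht : 0 < t) :
    interferenceKernel c p α ((c / p) ^ α⁻¹ * t) = (c / p) ^ α⁻¹ * (t / (1 + t ^ α)) := by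
  have hcp : 0 < c / p := div_pos hc hp
  have hscale : ((c / p) ^ α⁻¹ * t) ^ α = c / p * t ^ α := by
    rw [mul_rpow (rpow_nonneg hcp.le _) ht.le, ← rpow_mul hcp.le, inv_mul_cancel₀ hα, rpow_one]
  have : 0 < t ^ α := rpow_pos_of_pos ht α
  rw [interferenceKernel, hscale]
  field_simp
  ring

end InterferenceKernel

theorem integral_Ioi_div_one_add_rpow (α : ℝ) :
    ∫ t in Ioi (0 : ℝ), t / (1 + t ^ α) = (∫ u in Ioi (0 : ℝ), 1 / (1 + u ^ (α / 2))) / 2 := by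
  rw [← integral_comp_rpow_Ioi (fun u => 1 / (1 + u ^ (α / 2))) two_ne_zero,
    ← integral_div]
  refine setIntegral_congr_fun measurableSet_Ioi fun t (ht : 0 < t) => ?_
  have hsq : (t ^ (2 : ℝ)) ^ (α / 2) = t ^ α := by
    rw [← rpow_mul ht.le]
    ring_nf
  simp only [hsq, smul_eq_mul, abs_two]
  norm_num
  ring

theorem integral_interferenceKernel {c p α : ℝ} (hc : 0 < c) (hp : 0 < p) (hα : α ≠ 0) :
    ∫ y in Ioi (0 : ℝ), interferenceKernel c p α y =
      (c / p) ^ (2 / α) * (∫ u in Ioi (0 : ℝ), 1 / (1 + u ^ (α / 2))) / 2 := by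
  have hcp : 0 < c / p := div_pos hc hp
  set k := (c / p) ^ α⁻¹
  have hk : 0 < k := rpow_pos_of_pos hcp _
  have hkk : k * k = (c / p) ^ (2 / α) := by
    rw [← rpow_add hcp]
    ring_nf
  have hsubst := integral_comp_mul_left_Ioi (interferenceKernel c p α) 0 hk
  rw [mul_zero, smul_eq_mul, eq_inv_mul_iff_mul_eq₀ hk.ne',
    setIntegral_congr_fun measurableSet_Ioi fun t ht => interferenceKernel_rpow_inv_mul hc hp hα ht,
    integral_const_mul, integral_Ioi_div_one_add_rpow] at hsubst
  rw [← hsubst, ← hkk]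
  ring

theorem integral_Ioi_add_Ioc_add_Ioc_eq {F G : ℝ → ℝ} (hF : IntegrableOn F (Ioi 0)) {R d : ℝ}
    (hR : 0 ≤ R) (hRd : R ≤ d) :
    (∫ y in Ioi (R + d), F y) + (∫ y in Ioc |R - d| (R + d), G y) +
        (∫ y in Ioc (max 0 (R - d)) |R - d|, F y) =
      (∫ y in Ioi 0, F y) + ((∫ y in Ioc (d - R) (R + d), G y) - ∫ y in Ioc (d - R) (R + d), F y) := by
  rw [abs_of_nonpos (by linarith), neg_sub, max_eq_left (by linarith),
    ← Ioc_union_Ioi_eq_Ioi (show 0 ≤ R + d by linarith),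
    setIntegral_union Ioc_disjoint_Ioi_same measurableSet_Ioi
      (hF.mono_set Ioc_subset_Ioi_self) (hF.mono_set (Ioi_subset_Ioi (by linarith))),
    ← Ioc_union_Ioc_eq_Ioc (show 0 ≤ d - R by linarith) (show d - R ≤ R + d by linarith),
    setIntegral_union (Ioc_disjoint_Ioc_of_le le_rfl) measurableSet_Ioc
      (hF.mono_set Ioc_subset_Ioi_self)
      (hF.mono_set fun y hy => show 0 < y by linarith [hy.1])]
  ring

theorem tendsto_setIntegral_Ioc_sub_add_of_norm_le {G : ℝ → ℝ → ℝ} {d M : ℝ}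
    (hG : ∀ᶠ R in nhdsWithin 0 (Ioi 0), ∀ y ∈ Ioc (d - R) (R + d), ‖G R y‖ ≤ M) :
    Tendsto (fun R => ∫ y in Ioc (d - R) (R + d), G R y) (nhdsWithin 0 (Ioi 0)) (nhds 0) := by
  have hlin : Tendsto (fun R : ℝ => M * |(R + d) - (d - R)|) (nhdsWithin 0 (Ioi 0)) (nhds 0) := by
    have : Continuous fun R : ℝ => M * |(R + d) - (d - R)| := by fun_prop
    simpa using (this.tendsto 0).mono_left nhdsWithin_le_nhds
  refine squeeze_zero_norm' ?_ hlin
  filter_upwards [hG, self_mem_nhdsWithin] with R hbound (hR : 0 < R)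
  have hle : d - R ≤ R + d := by linarith
  rw [← intervalIntegral.integral_of_le hle]
  exact intervalIntegral.norm_integral_le_of_norm_le_const fun y hy =>
    hbound y (uIoc_of_le hle ▸ hy)

/-- Exponent limit underlying Remark 2, item 2: as the empty-ball radius `R → 0⁺`, the
interference exponent `E(R)` of the access probability formula (2) converges to the
full-plane integral `∫_0^∞ 2π·g(y) dy`, which equals
`π·(P₁θd^α/P₂)^{2/α}·∫_0^∞ du/(1 + u^{α/2})`. -/
theorem interference_exponent_tendsto_full_plane (d P₁ P₂ θ α : ℝ) (hd : 0 < d)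
    (hP₁ : 0 < P₁) (hP₂ : 0 < P₂) (hθ : 0 < θ) (hα : 2 < α)
    (g : ℝ → ℝ)
    (hg : ∀ y : ℝ, g y = P₁ * θ * d ^ α * y ^ (1 - α) / (P₂ + P₁ * θ * d ^ α * y ^ (-α))) :
    Tendsto (fun R : ℝ =>
        (∫ y in Set.Ioi (R + d), 2 * π * g y) +
          (∫ y in Set.Ioc |R - d| (R + d),
            2 * Real.arccos ((R ^ 2 - d ^ 2 - y ^ 2) / (2 * d * y)) * g y) +
          (∫ y in Set.Ioc (max 0 (R - d)) |R - d|, 2 * π * g y))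
      (nhdsWithin 0 (Set.Ioi 0)) (nhds (∫ y in Set.Ioi (0 : ℝ), 2 * π * g y)) ∧
    ∫ y in Set.Ioi (0 : ℝ), 2 * π * g y =
      π * (P₁ * θ * d ^ α / P₂) ^ (2 / α) * ∫ u in Set.Ioi (0 : ℝ), 1 / (1 + u ^ (α / 2)) := by
  have hc : 0 < P₁ * θ * d ^ α := by positivity
  have hgK : EqOn g (interferenceKernel (P₁ * θ * d ^ α) P₂ α) (Ioi 0) := fun y hy => by
    rw [hg, div_add_mul_rpow_neg_eq_interferenceKernel hy]
  have hint : IntegrableOn (fun y => 2 * π * g y) (Ioi 0) :=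
    ((integrableOn_interferenceKernel hc hP₂ hα).congr_fun hgK.symm measurableSet_Ioi).const_mul _
  have hbound : ∀ᶠ R in nhdsWithin (0 : ℝ) (Ioi 0), ∀ y ∈ Ioc (d - R) (R + d),
      ∀ w : ℝ, |w| ≤ 2 * π → ‖w * g y‖ ≤ 2 * π * (2 * d) := by
    filter_upwards [Ioo_mem_nhdsGT hd] with R ⟨hR, hRd⟩ y ⟨hy, hy'⟩ w hw
    have hy0 : 0 < y := by linarith
    have hK := interferenceKernel_le_self hc hP₂.le (α := α) hy0.le
    rw [norm_mul, hgK hy0, norm_of_nonneg (interferenceKernel_nonneg hc.le hP₂.le hy0.le)]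
    exact mul_le_mul hw (by linarith) (interferenceKernel_nonneg hc.le hP₂.le hy0.le) (by positivity)
  have harccos : ∀ R y : ℝ, |2 * arccos ((R ^ 2 - d ^ 2 - y ^ 2) / (2 * d * y))| ≤ 2 * π :=
    fun R y => by
      rw [abs_of_nonneg (mul_nonneg zero_le_two (arccos_nonneg _))]
      linarith [arccos_le_pi ((R ^ 2 - d ^ 2 - y ^ 2) / (2 * d * y))]
  have hpi : |2 * π| ≤ 2 * π := (abs_of_nonneg (by positivity)).le
  refine ⟨?_, ?_⟩
  · have hlens := (tendsto_setIntegral_Ioc_sub_add_of_norm_le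
      (hbound.mono fun R h y hy => h y hy _ (harccos R y))).sub
      (tendsto_setIntegral_Ioc_sub_add_of_norm_le (hbound.mono fun R h y hy => h y hy _ hpi))
    rw [sub_zero] at hlens
    rw [← add_zero (∫ y in Ioi (0 : ℝ), 2 * π * g y)]
    refine (hlens.const_add _).congr' ?_
    filter_upwards [Ioo_mem_nhdsGT hd] with R ⟨hR, hRd⟩
    exact (integral_Ioi_add_Ioc_add_Ioc_eq hint hR.le hRd.le).symm
  · rw [integral_const_mul, setIntegral_congr_fun measurableSet_Ioi hgK,
      integral_interferenceKernel hc hP₂ (by linarith)]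
    ring
end
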